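/- arXiv:1901.09574 — 2 statements merged into one kernel-verified Lean document; each statement's English description precedes it below -/
import Mathlib

section
/- Let J be an ideal of K{X;r} and let G = (g_1,…,g_s) be a Gröbner basis (resp. a minimal Gröbner basis) of J such that val_r(g_i) = 0 for all i. Then G is a Gröbner basis (resp. a minimal Gröbner basis) of the ideal J° = J ∩ K{X;r}° of K{X;r}°. -/
open MvPowerSeries

noncomputable section

/-- A normalized discrete valuation on a field `K`, complete with respect to
the associated distance. -/
structure IsCDVField {K : Type*} [Field K] (val : K → WithTop ℤ) : Prop where
  eq_top_iff : ∀ x : K, val x = ⊤ ↔ x = 0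
  map_one : val 1 = 0
  map_mul : ∀ x y : K, val (x * y) = val x + val y
  min_le_val_add : ∀ x y : K, min (val x) (val y) ≤ val (x + y)
  surjective : ∀ m : ℤ, ∃ x : K, val x = (m : WithTop ℤ)
  complete : ∀ u : ℕ → K,
      (∀ M : ℤ, ∃ N : ℕ, ∀ p, N ≤ p → ∀ q, N ≤ q → (M : WithTop ℤ) ≤ val (u p - u q)) →
      ∃ l : K, ∀ M : ℤ, ∃ N : ℕ, ∀ p, N ≤ p → (M : WithTop ℤ) ≤ val (u p - l)

/-- A monomial order: a well-order compatible with addition. -/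
structure IsMonomialOrder {M : Type*} [AddCommMonoid M] (mo : M → M → Prop) : Prop where
  refl : ∀ i, mo i i
  trans : ∀ i j k, mo i j → mo j k → mo i k
  antisymm : ∀ i j, mo i j → mo j i → i = j
  total : ∀ i j, mo i j ∨ mo j i
  add_right : ∀ i j k, mo i j → mo (i + k) (j + k)
  wf : WellFounded fun i j => mo i j ∧ i ≠ j

variable {K : Type*} [Field K] {n : ℕ}

/-- The valuation of `K`, with values in `WithTop ℚ`. -/
def valQ (val : K → WithTop ℤ) (a : K) : WithTop ℚ :=
  WithTop.map (fun m : ℤ => (m : ℚ)) (val a)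

/-- The dot product `r·i`. -/
def wt (r : Fin n → ℚ) (i : Fin n →₀ ℕ) : ℚ :=
  ∑ j, r j * (i j : ℚ)

/-- `val_r` of the term `a·X^i`, namely `val a - r·i`. -/
def tval (val : K → WithTop ℤ) (r : Fin n → ℚ) (a : K) (i : Fin n →₀ ℕ) : WithTop ℚ :=
  valQ val a + ((-wt r i : ℚ) : WithTop ℚ)

/-- `val_r` of the coefficient term of `f` at exponent `i`. -/
def cval (val : K → WithTop ℤ) (r : Fin n → ℚ) (f : MvPowerSeries (Fin n) K)
    (i : Fin n →₀ ℕ) : WithTop ℚ :=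
  tval val r (MvPowerSeries.coeff i f) i

/-- Membership in the Tate algebra `K{X; r}`: the coefficient valuations
`val(a_i) - r·i` tend to `+∞`, i.e. for each `C` only finitely many of them are `< C`. -/
def IsTate (val : K → WithTop ℤ) (r : Fin n → ℚ) (f : MvPowerSeries (Fin n) K) : Prop :=
  ∀ C : ℚ, {i : Fin n →₀ ℕ | cval val r f i < (C : WithTop ℚ)}.Finite

/-- The Tate algebra `K{X; r}`, as a subset of the ring of power series. -/
def TateSet (val : K → WithTop ℤ) (r : Fin n → ℚ) : Set (MvPowerSeries (Fin n) K) :=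
  {f | IsTate val r f}

/-- The integral Tate algebra `K{X; r}°` (Tate series of nonnegative Gauss valuation). -/
def TateIntSet (val : K → WithTop ℤ) (r : Fin n → ℚ) : Set (MvPowerSeries (Fin n) K) :=
  {f | IsTate val r f ∧ ∀ i, (0 : WithTop ℚ) ≤ cval val r f i}

/-- The Gauss valuation of `f` equals `v`. -/
def GaussValEq (val : K → WithTop ℤ) (r : Fin n → ℚ) (f : MvPowerSeries (Fin n) K)
    (v : ℚ) : Prop :=
  (∀ i, (v : WithTop ℚ) ≤ cval val r f i) ∧ ∃ i, cval val r f i = (v : WithTop ℚ)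

/-- `J` is an ideal of the subring `A` of the power series ring. -/
structure IsIdealOf (A J : Set (MvPowerSeries (Fin n) K)) : Prop where
  subset : J ⊆ A
  zero_mem : (0 : MvPowerSeries (Fin n) K) ∈ J
  add_mem : ∀ f ∈ J, ∀ g ∈ J, f + g ∈ J
  neg_mem : ∀ f ∈ J, -f ∈ J
  smul_mem : ∀ a ∈ A, ∀ f ∈ J, a * f ∈ J

/-- `a·X^i < b·X^j` for the term order attached to `val`, `r` and the monomial order `mo`. -/
def TermLt (val : K → WithTop ℤ) (r : Fin n → ℚ) (mo : (Fin n →₀ ℕ) → (Fin n →₀ ℕ) → Prop)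
    (a : K) (i : Fin n →₀ ℕ) (b : K) (j : Fin n →₀ ℕ) : Prop :=
  tval val r b j < tval val r a i ∨ (tval val r a i = tval val r b j ∧ i ≠ j ∧ mo i j)

/-- `a·X^i ≤ b·X^j` for the term order. -/
def TermLe (val : K → WithTop ℤ) (r : Fin n → ℚ) (mo : (Fin n →₀ ℕ) → (Fin n →₀ ℕ) → Prop)
    (a : K) (i : Fin n →₀ ℕ) (b : K) (j : Fin n →₀ ℕ) : Prop :=
  tval val r b j < tval val r a i ∨ (tval val r a i = tval val r b j ∧ mo i j)

/-- `a·X^i` is the leading term of `f`. -/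
def IsLeadingTerm (val : K → WithTop ℤ) (r : Fin n → ℚ)
    (mo : (Fin n →₀ ℕ) → (Fin n →₀ ℕ) → Prop)
    (f : MvPowerSeries (Fin n) K) (a : K) (i : Fin n →₀ ℕ) : Prop :=
  MvPowerSeries.coeff i f = a ∧ a ≠ 0 ∧
    ∀ j, MvPowerSeries.coeff j f ≠ 0 → j ≠ i →
      TermLt val r mo (MvPowerSeries.coeff j f) j a i

/-- `a·X^i` divides `b·X^j` in the monoid of terms `T(r)`. -/
def TDiv (a : K) (i : Fin n →₀ ℕ) (b : K) (j : Fin n →₀ ℕ) : Prop :=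
  a ≠ 0 ∧ b ≠ 0 ∧ ∃ k, j = i + k

/-- `a·X^i` divides `b·X^j` in the monoid of integral terms `T°(r)`. -/
def TIntDiv (val : K → WithTop ℤ) (r : Fin n → ℚ) (a : K) (i : Fin n →₀ ℕ)
    (b : K) (j : Fin n →₀ ℕ) : Prop :=
  a ≠ 0 ∧ b ≠ 0 ∧ ∃ k, j = i + k ∧ (0 : WithTop ℚ) ≤ tval val r (b * a⁻¹) k

/-- `g` is a Gröbner basis of `J`, as an ideal of `K{X;r}`. -/
def IsGB (val : K → WithTop ℤ) (r : Fin n → ℚ) (mo : (Fin n →₀ ℕ) → (Fin n →₀ ℕ) → Prop)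
    (J : Set (MvPowerSeries (Fin n) K)) {s : ℕ} (g : Fin s → MvPowerSeries (Fin n) K) : Prop :=
  (∀ k, g k ∈ J ∧ g k ≠ 0) ∧
    ∀ f ∈ J, ∀ a i, IsLeadingTerm val r mo f a i →
      ∃ k b j, IsLeadingTerm val r mo (g k) b j ∧ TDiv b j a i

/-- `g` is a Gröbner basis of `J`, as an ideal of `K{X;r}°`. -/
def IsGBInt (val : K → WithTop ℤ) (r : Fin n → ℚ) (mo : (Fin n →₀ ℕ) → (Fin n →₀ ℕ) → Prop)
    (J : Set (MvPowerSeries (Fin n) K)) {s : ℕ} (g : Fin s → MvPowerSeries (Fin n) K) : Prop :=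
  (∀ k, g k ∈ J ∧ g k ≠ 0) ∧
    ∀ f ∈ J, ∀ a i, IsLeadingTerm val r mo f a i →
      ∃ k b j, IsLeadingTerm val r mo (g k) b j ∧ TIntDiv val r b j a i

/-- The set `LT(J)` of leading terms of nonzero elements of `J`. -/
def LTSet (val : K → WithTop ℤ) (r : Fin n → ℚ) (mo : (Fin n →₀ ℕ) → (Fin n →₀ ℕ) → Prop)
    (J : Set (MvPowerSeries (Fin n) K)) : Set (K × (Fin n →₀ ℕ)) :=
  {t | ∃ f ∈ J, IsLeadingTerm val r mo f t.1 t.2}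

/-- Exponents of elements of `LT(J)`: the image of `LT(J)` modulo units of `K`. -/
def LTExpSet (val : K → WithTop ℤ) (r : Fin n → ℚ) (mo : (Fin n →₀ ℕ) → (Fin n →₀ ℕ) → Prop)
    (J : Set (MvPowerSeries (Fin n) K)) : Set (Fin n →₀ ℕ) :=
  {i | ∃ a, (a, i) ∈ LTSet val r mo J}

/-- The skeleton of `LT(J)` (modulo units of `K`): minimal elements for divisibility. -/
def SkelExp (val : K → WithTop ℤ) (r : Fin n → ℚ) (mo : (Fin n →₀ ℕ) → (Fin n →₀ ℕ) → Prop)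
    (J : Set (MvPowerSeries (Fin n) K)) : Set (Fin n →₀ ℕ) :=
  {i | i ∈ LTExpSet val r mo J ∧ ∀ j ∈ LTExpSet val r mo J, (∃ k, i = j + k) → j = i}

/-- The image of `LT(J)` modulo units of `K°`: pairs (exponent, valuation of the term). -/
def LTClassSet (val : K → WithTop ℤ) (r : Fin n → ℚ) (mo : (Fin n →₀ ℕ) → (Fin n →₀ ℕ) → Prop)
    (J : Set (MvPowerSeries (Fin n) K)) : Set ((Fin n →₀ ℕ) × ℚ) :=
  {c | ∃ a, (a, c.1) ∈ LTSet val r mo J ∧ tval val r a c.1 = (c.2 : WithTop ℚ)}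

/-- Divisibility of classes of integral terms modulo units of `K°`. -/
def ClassDiv {n : ℕ} (c d : (Fin n →₀ ℕ) × ℚ) : Prop :=
  (∃ k, d.1 = c.1 + k) ∧ c.2 ≤ d.2

/-- The skeleton of `LT(J)` modulo units of `K°`. -/
def SkelClass (val : K → WithTop ℤ) (r : Fin n → ℚ) (mo : (Fin n →₀ ℕ) → (Fin n →₀ ℕ) → Prop)
    (J : Set (MvPowerSeries (Fin n) K)) : Set ((Fin n →₀ ℕ) × ℚ) :=
  {c | c ∈ LTClassSet val r mo J ∧ ∀ d ∈ LTClassSet val r mo J, ClassDiv d c → d = c}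

/-- Minimal Gröbner basis of an ideal of `K{X;r}`: the classes of the leading terms
modulo units of `K` are pairwise distinct and are exactly the skeleton of `LT(J)`. -/
def IsMinGB (val : K → WithTop ℤ) (r : Fin n → ℚ) (mo : (Fin n →₀ ℕ) → (Fin n →₀ ℕ) → Prop)
    (J : Set (MvPowerSeries (Fin n) K)) {s : ℕ} (g : Fin s → MvPowerSeries (Fin n) K) : Prop :=
  IsGB val r mo J g ∧ ∃ e : Fin s → (Fin n →₀ ℕ),
    (∀ k, ∃ a, IsLeadingTerm val r mo (g k) a (e k)) ∧
    Function.Injective e ∧ Set.range e = SkelExp val r mo J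

/-- Minimal Gröbner basis of an ideal of `K{X;r}°`. -/
def IsMinGBInt (val : K → WithTop ℤ) (r : Fin n → ℚ) (mo : (Fin n →₀ ℕ) → (Fin n →₀ ℕ) → Prop)
    (J : Set (MvPowerSeries (Fin n) K)) {s : ℕ} (g : Fin s → MvPowerSeries (Fin n) K) : Prop :=
  IsGBInt val r mo J g ∧ ∃ e : Fin s → ((Fin n →₀ ℕ) × ℚ),
    (∀ k, ∃ a, IsLeadingTerm val r mo (g k) a (e k).1 ∧
      tval val r a (e k).1 = ((e k).2 : WithTop ℚ)) ∧
    Function.Injective e ∧ Set.range e = SkelClass val r mo J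

/-- The leading term of `f` (via choice). -/
def leadTerm (val : K → WithTop ℤ) (r : Fin n → ℚ) (mo : (Fin n →₀ ℕ) → (Fin n →₀ ℕ) → Prop)
    (f : MvPowerSeries (Fin n) K) : K × (Fin n →₀ ℕ) :=
  Classical.epsilon fun p => IsLeadingTerm val r mo f p.1 p.2

/-- Multiplication of a power series by the term `t`. -/
def termMul (t : K × (Fin n →₀ ℕ)) (f : MvPowerSeries (Fin n) K) : MvPowerSeries (Fin n) K :=
  (MvPowerSeries.monomial t.2 t.1) * f

/-- The S-polynomial `S(f, g) = (LT(g)/gcd(LT f, LT g))·f - (LT(f)/gcd(LT f, LT g))·g`. -/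
def Spoly (val : K → WithTop ℤ) (π : K) (r : Fin n → ℚ)
    (mo : (Fin n →₀ ℕ) → (Fin n →₀ ℕ) → Prop)
    (f g : MvPowerSeries (Fin n) K) : MvPowerSeries (Fin n) K :=
  let a := (leadTerm val r mo f).1
  let i := (leadTerm val r mo f).2
  let b := (leadTerm val r mo g).1
  let j := (leadTerm val r mo g).2
  let m : ℤ := min (WithTop.untopD 0 (val a)) (WithTop.untopD 0 (val b))
  termMul (b * π ^ (-m), j - i) f - termMul (a * π ^ (-m), i - j) g

/-- `f` reduces to zero modulo the family `g` with quotients in `A`. -/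
def ReducesToZero (val : K → WithTop ℤ) (r : Fin n → ℚ)
    (mo : (Fin n →₀ ℕ) → (Fin n →₀ ℕ) → Prop) (A : Set (MvPowerSeries (Fin n) K))
    {s : ℕ} (g : Fin s → MvPowerSeries (Fin n) K) (f : MvPowerSeries (Fin n) K) : Prop :=
  f = 0 ∨ ∃ q : Fin s → MvPowerSeries (Fin n) K, (∀ k, q k ∈ A) ∧ f = ∑ k, q k * g k ∧
    ∀ k i, MvPowerSeries.coeff i (q k) ≠ 0 →
      ∀ b j, IsLeadingTerm val r mo (g k) b j →
      ∀ a₀ i₀, IsLeadingTerm val r mo f a₀ i₀ →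
        TermLe val r mo (MvPowerSeries.coeff i (q k) * b) (i + j) a₀ i₀

/-!
A Gauss valuation `val_r(g_k) = 0` forces `val_r(LT(g_k)) = 0`, so whenever `LT(g_k)` divides
the leading term of some `f ∈ J°` in `T(r)`, the quotient has the valuation of `LT(f)`, which is
`≥ 0`: the division already takes place in `T°(r)`. For minimality, a class of integral terms
modulo units of `K°` is an exponent together with a valuation `≥ 0`. Every class of `LT(J°)` is
divisible by one of the classes `(i, 0)`, `i` a leading exponent of `G`, and such an `(i, 0)` is
divisible by no other class, as `i` is minimal in `LT(J)`; so these are the minimal classes.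
-/section

variable {val : K → WithTop ℤ} {r : Fin n → ℚ} {mo : (Fin n →₀ ℕ) → (Fin n →₀ ℕ) → Prop}
  {J : Set (MvPowerSeries (Fin n) K)} {s : ℕ} {g : Fin s → MvPowerSeries (Fin n) K}

lemma wt_add (i j : Fin n →₀ ℕ) : wt r (i + j) = wt r i + wt r j := by
  simp only [wt, Finsupp.add_apply, Nat.cast_add, mul_add, Finset.sum_add_distrib]

lemma valQ_mul (hval : IsCDVField val) (a b : K) :
    valQ val (a * b) = valQ val a + valQ val b := by
  rw [valQ, hval.map_mul]
  exact WithTop.map_add (Int.castAddHom ℚ) _ _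

lemma tval_mul (hval : IsCDVField val) (a b : K) (i j : Fin n →₀ ℕ) :
    tval val r (a * b) (i + j) = tval val r a i + tval val r b j := by
  simp only [tval, valQ_mul hval, wt_add, neg_add, WithTop.coe_add]
  ac_rfl

lemma tval_zero (hval : IsCDVField val) (i : Fin n →₀ ℕ) : tval val r 0 i = ⊤ := by
  simp [tval, valQ, (hval.eq_top_iff 0).mpr rfl]

lemma IsLeadingTerm.exp_eq (hmo : IsMonomialOrder mo) {f : MvPowerSeries (Fin n) K}
    {a b : K} {i j : Fin n →₀ ℕ} (hi : IsLeadingTerm val r mo f a i)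
    (hj : IsLeadingTerm val r mo f b j) : i = j := by
  by_contra hij
  have hji := hi.2.2 j (hj.1 ▸ hj.2.1) (Ne.symm hij)
  have hij' := hj.2.2 i (hi.1 ▸ hi.2.1) hij
  rw [hj.1] at hji
  rw [hi.1] at hij'
  rcases hji with hlt | ⟨heq, -, hmo_ji⟩ <;> rcases hij' with hlt' | ⟨heq', -, hmo_ij⟩
  · exact lt_asymm hlt hlt'
  · exact hlt.ne heq'
  · exact hlt'.ne heq
  · exact hij (hmo.antisymm i j hmo_ij hmo_ji)

lemma IsLeadingTerm.tval_eq_of_gaussValEq (hval : IsCDVField val)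
    {f : MvPowerSeries (Fin n) K} {a : K} {i : Fin n →₀ ℕ} {v : ℚ}
    (hlt : IsLeadingTerm val r mo f a i) (hf : GaussValEq val r f v) :
    tval val r a i = v := by
  obtain ⟨hle, i₀, hi₀⟩ := hf
  have hv_le : (v : WithTop ℚ) ≤ tval val r a i := hlt.1 ▸ hle i
  by_cases hii : i₀ = i
  · rw [← hlt.1, ← hii]
    exact hi₀
  have hc : coeff i₀ f ≠ 0 := by
    rintro hc
    rw [cval, hc, tval_zero hval] at hi₀
    exact WithTop.top_ne_coe hi₀
  rcases hlt.2.2 i₀ hc hii with hlt' | ⟨heq, -⟩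
  · exact absurd (hv_le.trans_lt (hi₀ ▸ hlt')) (lt_irrefl _)
  · exact heq.symm.trans hi₀

lemma IsLeadingTerm.tval_nonneg {f : MvPowerSeries (Fin n) K} {a : K} {i : Fin n →₀ ℕ}
    (hlt : IsLeadingTerm val r mo f a i) (hf : f ∈ TateIntSet val r) :
    0 ≤ tval val r a i :=
  hlt.1 ▸ hf.2 i

lemma mem_tateIntSet_of_gaussValEq_zero {f : MvPowerSeries (Fin n) K}
    (hf : f ∈ TateSet val r) (hf0 : GaussValEq val r f 0) : f ∈ TateIntSet val r :=
  ⟨hf, fun i => by exact_mod_cast hf0.1 i⟩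

lemma tval_mul_inv_of_tval_eq_zero (hval : IsCDVField val) {a b : K} {i j k : Fin n →₀ ℕ}
    (hb : b ≠ 0) (hb0 : tval val r b j = 0) (hi : i = j + k) :
    tval val r (a * b⁻¹) k = tval val r a i := by
  rw [hi, add_comm, ← add_zero (tval val r (a * b⁻¹) k), ← hb0, ← tval_mul hval,
    inv_mul_cancel_right₀ hb]


theorem IsGB.isGBInt (hval : IsCDVField val) (hJ : J ⊆ TateSet val r)
    (hg0 : ∀ k, GaussValEq val r (g k) 0) (hG : IsGB val r mo J g) :
    IsGBInt val r mo (J ∩ TateIntSet val r) g := by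
  refine ⟨fun k => ⟨⟨(hG.1 k).1, mem_tateIntSet_of_gaussValEq_zero (hJ (hG.1 k).1) (hg0 k)⟩,
    (hG.1 k).2⟩, fun f hf a i hlt => ?_⟩
  obtain ⟨k, b, j, hlt_g, hb, ha, q, hi⟩ := hG.2 f hf.1 a i hlt
  refine ⟨k, b, j, hlt_g, hb, ha, q, hi, ?_⟩
  have hb0 : tval val r b j = 0 := by exact_mod_cast hlt_g.tval_eq_of_gaussValEq hval (hg0 k)
  rw [tval_mul_inv_of_tval_eq_zero hval hb hb0 hi]
  exact hlt.tval_nonneg hf.2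

theorem IsMinGB.isMinGBInt (hval : IsCDVField val) (hmo : IsMonomialOrder mo)
    (hJ : J ⊆ TateSet val r) (hg0 : ∀ k, GaussValEq val r (g k) 0) (hG : IsMinGB val r mo J g) :
    IsMinGBInt val r mo (J ∩ TateIntSet val r) g := by
  obtain ⟨hGB, e, he_lt, he_inj, he_skel⟩ := hG
  have hmem : ∀ k, g k ∈ J ∩ TateIntSet val r := fun k =>
    ⟨(hGB.1 k).1, mem_tateIntSet_of_gaussValEq_zero (hJ (hGB.1 k).1) (hg0 k)⟩
  have he_tval : ∀ k, ∃ a, IsLeadingTerm val r mo (g k) a (e k) ∧ tval val r a (e k) = 0 :=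
    fun k => (he_lt k).imp fun a ha =>
      ⟨ha, by exact_mod_cast ha.tval_eq_of_gaussValEq hval (hg0 k)⟩
  have he_class : ∀ k, (e k, (0 : ℚ)) ∈ LTClassSet val r mo (J ∩ TateIntSet val r) := fun k =>
    (he_tval k).imp fun a ha => ⟨⟨g k, hmem k, ha.1⟩, by exact_mod_cast ha.2⟩
  refine ⟨hGB.isGBInt hval hJ hg0, fun k => (e k, 0), fun k => by exact_mod_cast he_tval k,
    fun k l hkl => he_inj (congrArg Prod.fst hkl), Set.Subset.antisymm ?_ ?_⟩
  · rintro _ ⟨k, rfl⟩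
    refine ⟨he_class k, ?_⟩
    rintro ⟨j, w⟩ ⟨a, ⟨f, hf, hlt⟩, hw⟩ ⟨hdvd, hw_le⟩
    have hw_nonneg : (0 : ℚ) ≤ w := by exact_mod_cast hw ▸ hlt.tval_nonneg hf.2
    have hj : j = e k := (he_skel ▸ Set.mem_range_self k : e k ∈ SkelExp val r mo J).2 j
      ⟨a, f, hf.1, hlt⟩ hdvd
    obtain rfl : w = 0 := le_antisymm hw_le hw_nonneg
    rw [hj]
  · rintro ⟨i, v⟩ ⟨⟨a, ⟨f, hf, hlt⟩, hv⟩, hmin⟩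
    obtain ⟨k, b, j, hlt_g, -, -, q, hi⟩ := hGB.2 f hf.1 a i hlt
    obtain ⟨a₀, ha₀⟩ := he_lt k
    have hj : j = e k := hlt_g.exp_eq hmo ha₀
    have hv_nonneg : (0 : ℚ) ≤ v := by exact_mod_cast hv ▸ hlt.tval_nonneg hf.2
    exact ⟨k, hmin _ (he_class k) ⟨⟨q, by subst hj; exact hi⟩, hv_nonneg⟩⟩

end

/-- if `G` is a Gröbner basis (resp. a minimal Gröbner basis) of an
ideal `J` of `K{X;r}` with `val_r(g_i) = 0` for all `i`, then `G` is a Gröbner basis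
(resp. a minimal Gröbner basis) of `J° = J ∩ K{X;r}°`. -/
theorem statement13 (val : K → WithTop ℤ) (hval : IsCDVField val) (r : Fin n → ℚ)
    (mo : (Fin n →₀ ℕ) → (Fin n →₀ ℕ) → Prop) (hmo : IsMonomialOrder mo)
    (J : Set (MvPowerSeries (Fin n) K)) (hJ : IsIdealOf (TateSet val r) J)
    (s : ℕ) (g : Fin s → MvPowerSeries (Fin n) K)
    (hg0 : ∀ k, GaussValEq val r (g k) 0) :
    (IsGB val r mo J g → IsGBInt val r mo (J ∩ TateIntSet val r) g) ∧
    (IsMinGB val r mo J g → IsMinGBInt val r mo (J ∩ TateIntSet val r) g) :=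
  ⟨IsGB.isGBInt hval hJ.subset hg0, IsMinGB.isMinGBInt hval hmo hJ.subset hg0⟩
end
end

section
/- Take r = (0,…,0). Let h_1,…,h_m be nonzero elements of K{X} and t_1,…,t_m terms such that the terms LT(t_1h_1),…,LT(t_mh_m) all coincide up to multiplication by units of K° (elements of valuation 0), and such that the sum Σ_{i=1}^m t_i h_i is zero or has leading term strictly smaller than LT(t_1h_1). Then there exist t'_1,…,t'_m, each a term or zero, such that Σ_{i=1}^m t_i h_i = Σ_{i=1}^{m−1} t'_i·S(h_i,h_{i+1}) + t'_m·h_m, with val(t'_m h_m) > val(t_1 h_1) if t'_m ≠ 0, and val(t'_i) + max(val(h_i), val(h_{i+1})) ≥ val(t_1 h_1) for each i ∈ {1,…,m−1} with t'_i ≠ 0. -/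
open MvPowerSeries

noncomputable section

variable {K : Type*} [Field K] {n : ℕ}

/-!
Write `LT h_k = b_k X^{j_k}`, `t_k = c_k X^{e_k}` (so `e_k + j_k = i₀` and `c_k b_k = a_k`) and
`s_p = a_0 + ⋯ + a_{p-1}`. Since `t_k h_k = (s_{k+1} - s_k) b_k⁻¹ X^{e_k} h_k`, Abel summation gives
`Σ t_k h_k = Σ_{k<m} s_{k+1} (b_k⁻¹ X^{e_k} h_k - b_{k+1}⁻¹ X^{e_{k+1}} h_{k+1})
  + s_{m+1} b_m⁻¹ X^{e_m} h_m`,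
and each difference is a term multiple of `S(h_k, h_{k+1})`. For `r = 0` the leading coefficient
`b_k` has the Gauss valuation of `h_k`, and every `s_p` has valuation `≥ v₀` by the ultrametric
inequality; this gives the bounds for `k < m`. Finally `s_{m+1}` is the coefficient of `X^{i₀}` in
the sum, which has valuation `> v₀` because the leading terms cancel.
-/

namespace IsCDVField

variable {val : K → WithTop ℤ}

def addValuation (hval : IsCDVField val) : AddValuation K (WithTop ℤ) :=
  AddValuation.of val ((hval.eq_top_iff 0).2 rfl) hval.map_one hval.min_le_val_add hval.map_mul

theorem val_zero (hval : IsCDVField val) : val 0 = ⊤ :=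
  (hval.eq_top_iff 0).2 rfl

theorem exists_val_eq_coe (hval : IsCDVField val) {x : K} (hx : x ≠ 0) : ∃ z : ℤ, val x = z := by
  obtain ⟨z, hz⟩ := WithTop.ne_top_iff_exists.1 fun h => hx ((hval.eq_top_iff x).1 h)
  exact ⟨z, hz.symm⟩

theorem val_inv (hval : IsCDVField val) (x : K) : val x⁻¹ = -val x :=
  hval.addValuation.map_inv

theorem val_zpow (hval : IsCDVField val) {π : K} (hπ : val π = (1 : ℤ)) (z : ℤ) :
    val (π ^ z) = z := by
  have hpow : ∀ N : ℕ, val (π ^ N) = ((N : ℤ) : WithTop ℤ) := fun N => by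
    rw [show val (π ^ N) = hval.addValuation (π ^ N) from rfl, AddValuation.map_pow]
    change N • val π = _
    rw [hπ, ← WithTop.coe_nsmul, nsmul_one]
  cases z with
  | ofNat N => simpa using hpow N
  | negSucc N =>
    rw [zpow_negSucc, hval.val_inv, hpow, Int.negSucc_eq]
    norm_cast

theorem val_zpow_min_mul_inv_mul_inv (hval : IsCDVField val) {π : K} (hπ : val π = (1 : ℤ))
    {b c : K} {β γ : ℤ} (hb : val b = β) (hc : val c = γ) :
    val (π ^ min β γ * b⁻¹ * c⁻¹) = ((-max β γ : ℤ) : WithTop ℤ) := by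
  rw [hval.map_mul, hval.map_mul, hval.val_zpow hπ, hval.val_inv, hval.val_inv, hb, hc]
  norm_cast
  omega

theorem valQ_mul (hval : IsCDVField val) (x y : K) :
    valQ val (x * y) = valQ val x + valQ val y := by
  simp only [valQ, hval.map_mul]
  exact WithTop.map_add (Int.castAddHom ℚ) _ _

theorem tval_mul_add (hval : IsCDVField val) (r : Fin n → ℚ) (c x : K) (e j : Fin n →₀ ℕ) :
    tval val r (c * x) (e + j) = tval val r c e + tval val r x j := by
  have hwt : wt r (e + j) = wt r e + wt r j := by
    simp only [wt, Finsupp.add_apply, Nat.cast_add, mul_add, Finset.sum_add_distrib]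
  rw [tval, tval, tval, hval.valQ_mul, hwt, neg_add, WithTop.coe_add]
  exact add_add_add_comm _ _ _ _

theorem tval_ne_top (hval : IsCDVField val) (r : Fin n → ℚ) {c : K} (hc : c ≠ 0) (e : Fin n →₀ ℕ) :
    tval val r c e ≠ ⊤ := by
  obtain ⟨z, hz⟩ := hval.exists_val_eq_coe hc
  simp [tval, valQ, hz]

theorem tval_zero (hval : IsCDVField val) (r : Fin n → ℚ) (e : Fin n →₀ ℕ) :
    tval val r 0 e = ⊤ := by
  simp [tval, valQ, hval.val_zero]

theorem le_val_partialSum (hval : IsCDVField val) {m : ℕ} {v : WithTop ℤ} {a : Fin m → K}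
    (ha : ∀ k, v ≤ val (a k)) (p : Fin (m + 1)) : v ≤ val (Fin.partialSum a p) := by
  induction p using Fin.induction with
  | zero => simp [hval.val_zero]
  | succ k ih =>
    rw [Fin.partialSum_succ]
    exact (le_min ih (ha k)).trans (hval.min_le_val_add _ _)

end IsCDVField

omit [Field K] in
theorem valQ_of_val_eq {val : K → WithTop ℤ} {x : K} {z : ℤ} (h : val x = z) :
    valQ val x = ((z : ℚ) : WithTop ℚ) := by
  rw [valQ, h]
  rfl

omit [Field K] in
theorem exists_val_eq_of_valQ_eq {val : K → WithTop ℤ} {b : K} {w : ℚ}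
    (hb : valQ val b = w) : ∃ β : ℤ, val b = β ∧ w = β := by
  cases hvb : val b with
  | top => simp [valQ, hvb] at hb
  | coe β =>
    refine ⟨β, rfl, ?_⟩
    rw [valQ, hvb, WithTop.map_coe] at hb
    exact_mod_cast hb.symm

omit [Field K] in
theorem intCast_le_valQ_add_intCast {val : K → WithTop ℤ} {x : K} {v z : ℤ}
    (h : (v : WithTop ℤ) ≤ val x + z) :
    ((v : ℚ) : WithTop ℚ) ≤ valQ val x + ((z : ℚ) : WithTop ℚ) := by
  rw [valQ]
  cases hx : val x with
  | top => simp
  | coe y =>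
    rw [hx, ← WithTop.coe_add, WithTop.coe_le_coe] at h
    change ((v : ℚ) : WithTop ℚ) ≤ ((y : ℚ) : WithTop ℚ) + ((z : ℚ) : WithTop ℚ)
    exact_mod_cast h

omit [Field K] in
theorem tval_zero_weight (val : K → WithTop ℤ) (a : K) (i : Fin n →₀ ℕ) :
    tval val (0 : Fin n → ℚ) a i = valQ val a := by
  simp [tval, wt]

theorem Fin.partialSum_last {M : Type*} [AddCommMonoid M] {m : ℕ} (f : Fin m → M) :
    Fin.partialSum f (Fin.last m) = ∑ k, f k := by
  rw [Fin.partialSum, Fin.val_last, List.take_of_length_le (by simp), List.sum_ofFn]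

theorem Fin.sum_sub_eq_sum_castSucc_sub_succ_add_last {M : Type*} [AddCommGroup M] {m : ℕ}
    (y z : Fin (m + 1) → M) (hz : z 0 = 0) :
    ∑ k, (y k - z k) = ∑ k : Fin m, (y k.castSucc - z k.succ) + y (Fin.last m) := by
  rw [Finset.sum_sub_distrib, Finset.sum_sub_distrib, Fin.sum_univ_castSucc y,
    Fin.sum_univ_succ z, hz]
  abel

theorem IsMonomialOrder.of_add_right {M : Type*} [AddCommMonoid M] [IsRightCancelAdd M]
    {mo : M → M → Prop} (hmo : IsMonomialOrder mo) {i j k : M} (h : mo (i + k) (j + k)) :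
    mo i j := by
  rcases hmo.total i j with hij | hji
  · exact hij
  · have hk : i + k = j + k := hmo.antisymm _ _ h (hmo.add_right j i k hji)
    rw [add_right_cancel hk]
    exact hmo.refl j

section TermOrder

variable {val : K → WithTop ℤ} {r : Fin n → ℚ} {mo : (Fin n →₀ ℕ) → (Fin n →₀ ℕ) → Prop}

omit [Field K] in
theorem TermLt.asymm (hmo : IsMonomialOrder mo) {x y : K} {i j : Fin n →₀ ℕ}
    (hxy : TermLt val r mo x i y j) (hyx : TermLt val r mo y j x i) : False := by
  rcases hxy with hxy | ⟨hxy, hne, hij⟩ <;> rcases hyx with hyx | ⟨hyx, -, hji⟩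
  · exact hxy.not_gt hyx
  · exact hxy.ne hyx
  · exact hyx.ne hxy
  · exact hne (hmo.antisymm _ _ hij hji)

omit [Field K] in
theorem TermLt.trans (hmo : IsMonomialOrder mo) {x y z : K} {i j k : Fin n →₀ ℕ}
    (hxy : TermLt val r mo x i y j) (hyz : TermLt val r mo y j z k) :
    TermLt val r mo x i z k := by
  rcases hxy with hxy | ⟨hxy, hne, hij⟩ <;> rcases hyz with hyz | ⟨hyz, -, hjk⟩
  · exact Or.inl (hyz.trans hxy)
  · exact Or.inl (hyz ▸ hxy)
  · exact Or.inl (hxy ▸ hyz)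
  · refine Or.inr ⟨hxy.trans hyz, fun hik => hne ?_, hmo.trans _ _ _ hij hjk⟩
    subst hik
    exact hmo.antisymm _ _ hij hjk

omit [Field K] in
theorem TermLt.tval_lt_of_exp_eq {x y : K} {i : Fin n →₀ ℕ} (h : TermLt val r mo x i y i) :
    tval val r y i < tval val r x i := by
  rcases h with h | ⟨-, hne, -⟩
  · exact h
  · exact absurd rfl hne

theorem TermLt.of_mul_add (hval : IsCDVField val) (hmo : IsMonomialOrder mo) {c x y : K}
    (hc : c ≠ 0) {e i j : Fin n →₀ ℕ} (h : TermLt val r mo (c * x) (e + i) (c * y) (e + j)) :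
    TermLt val r mo x i y j := by
  have hc' := hval.tval_ne_top r hc e
  simp only [TermLt, hval.tval_mul_add] at h
  rcases h with h | ⟨h, hne, hij⟩
  · exact Or.inl ((WithTop.add_lt_add_iff_left hc').1 h)
  · refine Or.inr ⟨WithTop.add_left_cancel hc' h, fun hij' => hne (hij' ▸ rfl), ?_⟩
    rw [add_comm e, add_comm e] at hij
    exact hmo.of_add_right hij

theorem IsLeadingTerm.unique (hmo : IsMonomialOrder mo) {f : MvPowerSeries (Fin n) K}
    {a b : K} {i j : Fin n →₀ ℕ} (ha : IsLeadingTerm val r mo f a i)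
    (hb : IsLeadingTerm val r mo f b j) : a = b ∧ i = j := by
  by_cases hij : i = j
  · subst hij
    exact ⟨ha.1.symm.trans hb.1, rfl⟩
  · have hlt := hb.2.2 i (ha.1 ▸ ha.2.1) hij
    have hgt := ha.2.2 j (hb.1 ▸ hb.2.1) (Ne.symm hij)
    rw [ha.1] at hlt
    rw [hb.1] at hgt
    exact (hlt.asymm hmo hgt).elim

theorem leadTerm_eq (hmo : IsMonomialOrder mo) {f : MvPowerSeries (Fin n) K} {a : K}
    {i : Fin n →₀ ℕ} (h : IsLeadingTerm val r mo f a i) : leadTerm val r mo f = (a, i) := by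
  have hspec := Classical.epsilon_spec
    (p := fun p : K × (Fin n →₀ ℕ) => IsLeadingTerm val r mo f p.1 p.2) ⟨(a, i), h⟩
  obtain ⟨ha, hi⟩ := hspec.unique hmo h
  exact Prod.ext ha hi

theorem coeff_termMul (u : K × (Fin n →₀ ℕ)) (f : MvPowerSeries (Fin n) K) (i : Fin n →₀ ℕ) :
    coeff i (termMul u f)
      = if u.2 ≤ i then u.1 * coeff (i - u.2) f else 0 :=
  MvPowerSeries.coeff_monomial_mul _ _ _ _

theorem coeff_termMul_add (c : K) (e i : Fin n →₀ ℕ) (f : MvPowerSeries (Fin n) K) :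
    coeff (e + i) (termMul (c, e) f) = c * coeff i f := by
  rw [coeff_termMul, if_pos le_self_add, add_tsub_cancel_left]

theorem IsLeadingTerm.exists_of_termMul (hval : IsCDVField val) (hmo : IsMonomialOrder mo)
    {u : K × (Fin n →₀ ℕ)} (hu : u.1 ≠ 0) {f : MvPowerSeries (Fin n) K} {a : K}
    {i : Fin n →₀ ℕ} (h : IsLeadingTerm val r mo (termMul u f) a i) :
    ∃ j, u.2 + j = i ∧ IsLeadingTerm val r mo f (u.1⁻¹ * a) j := by
  obtain ⟨hcoeff, ha, hlead⟩ := h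
  rw [coeff_termMul] at hcoeff
  split_ifs at hcoeff with hle
  · refine ⟨i - u.2, add_tsub_cancel_of_le hle, ?_, mul_ne_zero (inv_ne_zero hu) ha, ?_⟩
    · rw [← hcoeff, inv_mul_cancel_left₀ hu]
    · intro j hj hne
      have hmul := hlead (u.2 + j) (by rwa [coeff_termMul_add, mul_ne_zero_iff_left hu])
        (fun hji => hne (by rw [← hji, add_tsub_cancel_left]))
      rw [coeff_termMul_add, ← hcoeff, ← add_tsub_cancel_of_le hle, add_tsub_cancel_left] at hmul
      rw [← hcoeff, inv_mul_cancel_left₀ hu]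
      exact hmul.of_mul_add hval hmo hu
  · exact absurd hcoeff.symm ha

theorem GaussValEq.tval_eq_of_isLeadingTerm (hval : IsCDVField val)
    {f : MvPowerSeries (Fin n) K} {w : ℚ} {b : K} {j : Fin n →₀ ℕ}
    (hw : GaussValEq val r f w) (hb : IsLeadingTerm val r mo f b j) :
    tval val r b j = w := by
  refine le_antisymm ?_ (hb.1 ▸ hw.1 j)
  obtain ⟨i, hi⟩ := hw.2
  rw [cval] at hi
  by_cases hij : i = j
  · rw [← hi, hij, hb.1]
  · have hne : coeff i f ≠ 0 := fun h0 => by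
      rw [h0, hval.tval_zero] at hi
      exact WithTop.top_ne_coe hi
    rcases hb.2.2 i hne hij with hlt | ⟨heq, -⟩
    · exact (hi ▸ hlt).le
    · exact (hi ▸ heq).symm.le

theorem tval_lt_tval_coeff (hval : IsCDVField val) (hmo : IsMonomialOrder mo)
    {F : MvPowerSeries (Fin n) K} {a : K} (ha : a ≠ 0) {i : Fin n →₀ ℕ}
    (hF : F = 0 ∨ ∃ b j, IsLeadingTerm val r mo F b j ∧ TermLt val r mo b j a i) :
    tval val r a i < tval val r (coeff i F) i := by
  by_cases hc : coeff i F = 0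
  · rw [hc, hval.tval_zero]
    exact lt_top_iff_ne_top.2 (hval.tval_ne_top r ha i)
  obtain ⟨b, j, hlead, hlt⟩ := hF.resolve_left fun h0 => hc (by rw [h0, map_zero])
  by_cases hji : j = i
  · subst hji
    rw [hlead.1]
    exact hlt.tval_lt_of_exp_eq
  · exact ((hlead.2.2 i hc (Ne.symm hji)).trans hmo hlt).tval_lt_of_exp_eq

theorem le_cval_termMul (hval : IsCDVField val) {f : MvPowerSeries (Fin n) K} {w : WithTop ℚ}
    (hf : ∀ i, w ≤ cval val r f i) (u : K × (Fin n →₀ ℕ)) (i : Fin n →₀ ℕ) :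
    tval val r u.1 u.2 + w ≤ cval val r (termMul u f) i := by
  by_cases hle : u.2 ≤ i
  · obtain ⟨j, rfl⟩ := exists_add_of_le hle
    rw [cval, coeff_termMul_add, hval.tval_mul_add]
    exact add_le_add le_rfl (hf j)
  · rw [cval, coeff_termMul, if_neg hle, hval.tval_zero]
    exact le_top

end TermOrder

theorem termMul_termMul (u v : K × (Fin n →₀ ℕ)) (f : MvPowerSeries (Fin n) K) :
    termMul u (termMul v f) = termMul (u.1 * v.1, u.2 + v.2) f := by
  rw [termMul, termMul, termMul, ← mul_assoc, MvPowerSeries.monomial_mul_monomial]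

theorem termMul_sub (u : K × (Fin n →₀ ℕ)) (f g : MvPowerSeries (Fin n) K) :
    termMul u (f - g) = termMul u f - termMul u g :=
  mul_sub _ _ _

theorem sub_termMul (x y : K) (e : Fin n →₀ ℕ) (f : MvPowerSeries (Fin n) K) :
    termMul (x - y, e) f = termMul (x, e) f - termMul (y, e) f := by
  rw [termMul, termMul, termMul, map_sub, sub_mul]

theorem Finsupp.tsub_sup_add_tsub {e i j p : Fin n →₀ ℕ} (hi : e + i = p) (hj : j ≤ p) :
    p - (i ⊔ j) + (j - i) = e := by
  ext x
  have hix := congrArg (· x) hi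
  have hjx := hj x
  simp only [Finsupp.add_apply, Finsupp.tsub_apply, Finsupp.sup_apply] at hix ⊢
  omega

theorem termMul_termMul_sub_termMul {b c u : K} (hb : b ≠ 0) (hc : c ≠ 0) (hu : u ≠ 0)
    {e e' i j p : Fin n →₀ ℕ} (hi : e + i = p) (hj : e' + j = p) (σ : K)
    (f g : MvPowerSeries (Fin n) K) :
    termMul (σ * (u * b⁻¹ * c⁻¹), p - (i ⊔ j))
        (termMul (c * u⁻¹, j - i) f - termMul (b * u⁻¹, i - j) g)
      = termMul (σ * b⁻¹, e) f - termMul (σ * c⁻¹, e') g := by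
  have hcf : σ * (u * b⁻¹ * c⁻¹) * (c * u⁻¹) = σ * b⁻¹ := by field_simp
  have hcg : σ * (u * b⁻¹ * c⁻¹) * (b * u⁻¹) = σ * c⁻¹ := by field_simp
  rw [termMul_sub, termMul_termMul, termMul_termMul, hcf, hcg,
    Finsupp.tsub_sup_add_tsub hi (hj ▸ le_add_self), sup_comm,
    Finsupp.tsub_sup_add_tsub hj (hi ▸ le_add_self)]

theorem Spoly_eq {val : K → WithTop ℤ} {r : Fin n → ℚ}
    {mo : (Fin n →₀ ℕ) → (Fin n →₀ ℕ) → Prop} (hmo : IsMonomialOrder mo) (π : K)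
    {f g : MvPowerSeries (Fin n) K} {b c : K} {i j : Fin n →₀ ℕ}
    (hf : IsLeadingTerm val r mo f b i) (hg : IsLeadingTerm val r mo g c j) :
    Spoly val π r mo f g
      = termMul (c * (π ^ min ((val b).untopD 0) ((val c).untopD 0))⁻¹, j - i) f
        - termMul (b * (π ^ min ((val b).untopD 0) ((val c).untopD 0))⁻¹, i - j) g := by
  simp only [Spoly, leadTerm_eq hmo hf, leadTerm_eq hmo hg, zpow_neg]

/-- The `k`-th coefficient is `s_{k+1} · gcd / (b_k b_{k+1})` with `s_p = Fin.partialSum a p`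
and `gcd = π ^ min (val b_k) (val b_{k+1})` the coefficient of `gcd(LT h_k, LT h_{k+1})`. -/
def cancelQuotients (val : K → WithTop ℤ) (π : K) {m : ℕ} (a b : Fin (m + 1) → K)
    (j : Fin (m + 1) → Fin n →₀ ℕ) (i₀ : Fin n →₀ ℕ) : Fin (m + 1) → K × (Fin n →₀ ℕ) :=
  Fin.lastCases (Fin.partialSum a (Fin.last (m + 1)) * (b (Fin.last m))⁻¹, i₀ - j (Fin.last m))
    fun k => (Fin.partialSum a k.castSucc.succ
        * (π ^ min ((val (b k.castSucc)).untopD 0) ((val (b k.succ)).untopD 0)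
          * (b k.castSucc)⁻¹ * (b k.succ)⁻¹), i₀ - (j k.castSucc ⊔ j k.succ))

section CancelQuotients

variable {val : K → WithTop ℤ} {π : K} {m : ℕ} {a b : Fin (m + 1) → K}
  {j : Fin (m + 1) → Fin n →₀ ℕ} {i₀ : Fin n →₀ ℕ}

theorem cancelQuotients_last : cancelQuotients val π a b j i₀ (Fin.last m)
    = (Fin.partialSum a (Fin.last (m + 1)) * (b (Fin.last m))⁻¹, i₀ - j (Fin.last m)) :=
  Fin.lastCases_last

theorem cancelQuotients_castSucc (k : Fin m) : cancelQuotients val π a b j i₀ k.castSucc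
    = (Fin.partialSum a k.castSucc.succ
        * (π ^ min ((val (b k.castSucc)).untopD 0) ((val (b k.succ)).untopD 0)
          * (b k.castSucc)⁻¹ * (b k.succ)⁻¹), i₀ - (j k.castSucc ⊔ j k.succ)) :=
  Fin.lastCases_castSucc _

theorem sum_termMul_eq_cancelQuotients {r : Fin n → ℚ}
    {mo : (Fin n →₀ ℕ) → (Fin n →₀ ℕ) → Prop} (hmo : IsMonomialOrder mo) (hπ : π ≠ 0)
    {h : Fin (m + 1) → MvPowerSeries (Fin n) K} {t : Fin (m + 1) → K × (Fin n →₀ ℕ)}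
    (hLT : ∀ k, IsLeadingTerm val r mo (h k) (b k) (j k)) (hexp : ∀ k, (t k).2 + j k = i₀)
    (hcoef : ∀ k, (t k).1 * b k = a k) :
    ∑ k, termMul (t k) (h k)
      = ∑ k : Fin m, termMul (cancelQuotients val π a b j i₀ k.castSucc)
          (Spoly val π r mo (h k.castSucc) (h k.succ))
        + termMul (cancelQuotients val π a b j i₀ (Fin.last m)) (h (Fin.last m)) := by
  have hb : ∀ k, b k ≠ 0 := fun k => (hLT k).2.1
  have hsplit : ∀ k, termMul (t k) (h k)
      = termMul (Fin.partialSum a k.succ * (b k)⁻¹, (t k).2) (h k)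
        - termMul (Fin.partialSum a k.castSucc * (b k)⁻¹, (t k).2) (h k) := fun k => by
    rw [← sub_termMul, ← sub_mul, Fin.partialSum_succ, add_sub_cancel_left, ← hcoef k,
      mul_inv_cancel_right₀ (hb k)]
  rw [Finset.sum_congr rfl fun k _ => hsplit k,
    Fin.sum_sub_eq_sum_castSucc_sub_succ_add_last _ _ (by simp [termMul])]
  congr 1
  · refine Finset.sum_congr rfl fun k _ => ?_
    rw [Spoly_eq hmo π (hLT _) (hLT _), cancelQuotients_castSucc,
      termMul_termMul_sub_termMul (hb _) (hb _) (zpow_ne_zero _ hπ) (hexp _) (hexp _),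
      Fin.succ_castSucc]
  · rw [cancelQuotients_last, ← Fin.succ_last, ← eq_tsub_of_add_eq (hexp _)]

end CancelQuotients

theorem lt_cval_termMul_mul_inv {val : K → WithTop ℤ}
    {mo : (Fin n →₀ ℕ) → (Fin n →₀ ℕ) → Prop} (hval : IsCDVField val)
    {f : MvPowerSeries (Fin n) K} {b : K} {j : Fin n →₀ ℕ} {w : ℚ}
    (hb : IsLeadingTerm val 0 mo f b j) (hw : GaussValEq val 0 f w) {v : WithTop ℚ} {σ : K}
    (hσ : v < valQ val σ) (e i : Fin n →₀ ℕ) :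
    v < cval val 0 (termMul (σ * b⁻¹, e) f) i :=
  calc v < valQ val σ := hσ
    _ = tval val 0 (σ * b⁻¹) e + w := by
      rw [tval_zero_weight, ← hw.tval_eq_of_isLeadingTerm hval hb, tval_zero_weight,
        ← hval.valQ_mul, inv_mul_cancel_right₀ hb.2.1]
    _ ≤ cval val 0 (termMul (σ * b⁻¹, e) f) i := le_cval_termMul hval hw.1 _ i

theorem intCast_le_valQ_mul_add_max {val : K → WithTop ℤ} (hval : IsCDVField val) {π : K}
    (hπ : val π = (1 : ℤ)) {b c : K} {w w' : ℚ} (hb : valQ val b = w) (hc : valQ val c = w')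
    {v : ℤ} {σ : K} (hσ : (v : WithTop ℤ) ≤ val σ) :
    ((v : ℚ) : WithTop ℚ) ≤ valQ val (σ * (π ^ min ((val b).untopD 0) ((val c).untopD 0)
      * b⁻¹ * c⁻¹)) + ((max w w' : ℚ) : WithTop ℚ) := by
  obtain ⟨β, hβ, rfl⟩ := exists_val_eq_of_valQ_eq hb
  obtain ⟨γ, hγ, rfl⟩ := exists_val_eq_of_valQ_eq hc
  rw [hβ, hγ, WithTop.untopD_coe, WithTop.untopD_coe, ← Int.cast_max]
  apply intCast_le_valQ_add_intCast
  rw [hval.map_mul, hval.val_zpow_min_mul_inv_mul_inv hπ hβ hγ, add_assoc, ← WithTop.coe_add,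
    neg_add_cancel, WithTop.coe_zero, add_zero]
  exact hσ

theorem statement17_general (val : K → WithTop ℤ) (hval : IsCDVField val)
    (π : K) (hπ : val π = (1 : ℤ))
    (mo : (Fin n →₀ ℕ) → (Fin n →₀ ℕ) → Prop) (hmo : IsMonomialOrder mo)
    (m : ℕ) (h : Fin (m + 1) → MvPowerSeries (Fin n) K)
    (t : Fin (m + 1) → K × (Fin n →₀ ℕ)) (ht : ∀ k, (t k).1 ≠ 0)
    (a : Fin (m + 1) → K) (i₀ : Fin n →₀ ℕ) (v₀ : ℤ)
    (hlt : ∀ k, IsLeadingTerm val (0 : Fin n → ℚ) mo (termMul (t k) (h k)) (a k) i₀ ∧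
      val (a k) = (v₀ : WithTop ℤ))
    (w : Fin (m + 1) → ℚ) (hw : ∀ k, GaussValEq val (0 : Fin n → ℚ) (h k) (w k))
    (hsum : (∑ k, termMul (t k) (h k)) = 0 ∨
      ∃ b j, IsLeadingTerm val (0 : Fin n → ℚ) mo (∑ k, termMul (t k) (h k)) b j ∧
        TermLt val (0 : Fin n → ℚ) mo b j (a 0) i₀) :
    ∃ t' : Fin (m + 1) → K × (Fin n →₀ ℕ),
      (∑ k, termMul (t k) (h k)) =
        (∑ k : Fin m, termMul (t' k.castSucc)
          (Spoly val π (0 : Fin n → ℚ) mo (h k.castSucc) (h k.succ)))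
        + termMul (t' (Fin.last m)) (h (Fin.last m)) ∧
      ((t' (Fin.last m)).1 ≠ 0 →
        ∀ i, (((v₀ : ℚ) : WithTop ℚ)) <
          cval val (0 : Fin n → ℚ) (termMul (t' (Fin.last m)) (h (Fin.last m))) i) ∧
      (∀ k : Fin m, (t' k.castSucc).1 ≠ 0 →
        (((v₀ : ℚ) : WithTop ℚ)) ≤
          valQ val (t' k.castSucc).1 + ((max (w k.castSucc) (w k.succ) : ℚ) : WithTop ℚ)) := by
  choose j hexp hLT using fun k => (hlt k).1.exists_of_termMul hval hmo (ht k)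
  have hGauss : ∀ k, valQ val ((t k).1⁻¹ * a k) = w k := fun k => by
    rw [← tval_zero_weight val _ (j k)]
    exact (hw k).tval_eq_of_isLeadingTerm hval (hLT k)
  have hcoeff : coeff i₀ (∑ k, termMul (t k) (h k))
      = Fin.partialSum a (Fin.last (m + 1)) := by
    rw [map_sum, Fin.partialSum_last]
    exact Finset.sum_congr rfl fun k _ => (hlt k).1.1
  have hcancel : ((v₀ : ℚ) : WithTop ℚ) < valQ val (Fin.partialSum a (Fin.last (m + 1))) := by
    have h0 := tval_lt_tval_coeff hval hmo (hlt 0).1.2.1 hsum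
    rwa [tval_zero_weight, tval_zero_weight, valQ_of_val_eq (hlt 0).2, hcoeff] at h0
  refine ⟨cancelQuotients val π a (fun k => (t k).1⁻¹ * a k) j i₀,
    sum_termMul_eq_cancelQuotients hmo (fun h0 => by simp [h0, hval.val_zero] at hπ) hLT hexp
      fun k => mul_inv_cancel_left₀ (ht k) _,
    fun _ i => ?_, fun k _ => ?_⟩
  · rw [cancelQuotients_last]
    exact lt_cval_termMul_mul_inv hval (hLT _) (hw _) hcancel _ i
  · rw [cancelQuotients_castSucc]
    exact intCast_le_valQ_mul_add_max hval hπ (hGauss _) (hGauss _)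
      (hval.le_val_partialSum (fun k => (hlt k).2.ge) _)

/-- (r = 0) cancellation lemma: if the terms `LT(t_k·h_k)` all agree
up to units of `K°` (common exponent `i₀`, common valuation `v₀`) and the sum
`Σ t_k·h_k` is zero or has leading term `< LT(t_1·h_1)`, then the sum can be
rewritten on the S-polynomials `S(h_k, h_{k+1})` and `h_m`, with the stated
valuation bounds. -/
theorem statement17 (val : K → WithTop ℤ) (hval : IsCDVField val)
    (π : K) (hπ : val π = (1 : ℤ))
    (mo : (Fin n →₀ ℕ) → (Fin n →₀ ℕ) → Prop) (hmo : IsMonomialOrder mo)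
    (m : ℕ) (h : Fin (m + 1) → MvPowerSeries (Fin n) K)
    (hh : ∀ k, IsTate val (0 : Fin n → ℚ) (h k) ∧ h k ≠ 0)
    (t : Fin (m + 1) → K × (Fin n →₀ ℕ)) (ht : ∀ k, (t k).1 ≠ 0)
    (a : Fin (m + 1) → K) (i₀ : Fin n →₀ ℕ) (v₀ : ℤ)
    (hlt : ∀ k, IsLeadingTerm val (0 : Fin n → ℚ) mo (termMul (t k) (h k)) (a k) i₀ ∧
      val (a k) = (v₀ : WithTop ℤ))
    (w : Fin (m + 1) → ℚ) (hw : ∀ k, GaussValEq val (0 : Fin n → ℚ) (h k) (w k))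
    (hsum : (∑ k, termMul (t k) (h k)) = 0 ∨
      ∃ b j, IsLeadingTerm val (0 : Fin n → ℚ) mo (∑ k, termMul (t k) (h k)) b j ∧
        TermLt val (0 : Fin n → ℚ) mo b j (a 0) i₀) :
    ∃ t' : Fin (m + 1) → K × (Fin n →₀ ℕ),
      (∑ k, termMul (t k) (h k)) =
        (∑ k : Fin m, termMul (t' k.castSucc)
          (Spoly val π (0 : Fin n → ℚ) mo (h k.castSucc) (h k.succ)))
        + termMul (t' (Fin.last m)) (h (Fin.last m)) ∧
      ((t' (Fin.last m)).1 ≠ 0 →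
        ∀ i, (((v₀ : ℚ) : WithTop ℚ)) <
          cval val (0 : Fin n → ℚ) (termMul (t' (Fin.last m)) (h (Fin.last m))) i) ∧
      (∀ k : Fin m, (t' k.castSucc).1 ≠ 0 →
        (((v₀ : ℚ) : WithTop ℚ)) ≤
          valQ val (t' k.castSucc).1 + ((max (w k.castSucc) (w k.succ) : ℚ) : WithTop ℚ)) :=
  statement17_general val hval π hπ mo hmo m h t ht a i₀ v₀ hlt w hw hsum
end
end
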